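/- Let H : ℝ^{3×3} → ℝ satisfy 0 ≤ H(A) ≤ (1/8)|A|⁴ for all A. If λ, μ ∈ ℝ^{3×3} satisfy |λ| ≤ (3/8) |μ|^{2/3}, then g_H(λ, μ) ≥ (1/16) ( |μ|^{4/3} + |λ|² ). In particular, a suitable witness is A = μ |μ|^{−2/3} (and A = 0 when μ = 0). -/

import Mathlib

/-!
Take `A = t μ` with `t = |μ|^{-2/3}`, so that `|A| = s := |μ|^{1/3}` and `A : μ = s⁴`.
The rows of `T(A)` are twice the cross products of pairs of rows of `A` (`T(A)` is twice the
cofactor matrix), and `|u × v| ≤ |u| |v|`, so `|T(A)| ≤ 2 |A|²`. With Cauchy–Schwarz and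
`H(A) ≤ s⁴ / 8` the objective at `A` is at least `(7/8) s⁴ - 2 |λ| s²`, which dominates
`(1/16) (s⁴ + |λ|²)` as soon as `|λ| ≤ (3/8) s²`.
-/

open scoped BigOperators

noncomputable section

/-- `3 × 3` real matrices, as functions of (row, column). -/
abbrev M33 := Fin 3 → Fin 3 → ℝ

/-- The Levi-Civita symbol on indices in `Fin 3`. -/
def eps (i j k : Fin 3) : ℝ :=
  ((i.val : ℝ) - j.val) * ((j.val : ℝ) - k.val) * ((k.val : ℝ) - i.val) / 2

/-- The contraction `X : Y = Σ_{i,j} X_{ij} Y_{ij}`. -/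
def dotM (X Y : M33) : ℝ := ∑ i, ∑ j, X i j * Y i j

/-- `T(A)_{Zp} = ε_{pqr} ε_{ZBC} A_{Bq} A_{Cr}`. -/
def Tmap (A : M33) : M33 :=
  fun Z p => ∑ q, ∑ r, ∑ B, ∑ C, eps p q r * eps Z B C * A B q * A C r

/-- The Frobenius norm on `M33`. -/
def fnorm (A : M33) : ℝ := Real.sqrt (∑ i, ∑ j, (A i j) ^ 2)

/-- `g_H(λ, μ) = sup_{A} ( A:μ + λ:T(A) − H(A) )`, valued in `ℝ ∪ {±∞}` (the
supremum is never `-∞` since `H` is real-valued). -/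
def gH (H : M33 → ℝ) (lam mu : M33) : EReal :=
  ⨆ A : M33, ((dotM A mu + dotM lam (Tmap A) - H A : ℝ) : EReal)

open Matrix

lemma Tmap_eq_cross (A : M33) :
    Tmap A = ![(2 : ℝ) • A 1 ⨯₃ A 2, (2 : ℝ) • A 2 ⨯₃ A 0, (2 : ℝ) • A 0 ⨯₃ A 1] := by
  ext Z p
  fin_cases Z <;> fin_cases p <;>
    simp [Tmap, eps, Fin.sum_univ_three, cross_apply] <;> ring

lemma dotProduct_self_cross_le (u v : Fin 3 → ℝ) :
    u ⨯₃ v ⬝ᵥ u ⨯₃ v ≤ (u ⬝ᵥ u) * (v ⬝ᵥ v) := by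
  rw [cross_dot_cross, dotProduct_comm v u]
  nlinarith [sq_nonneg (u ⬝ᵥ v)]

lemma sum_sq_eq_sum_dotProduct (A : M33) : ∑ i, ∑ j, A i j ^ 2 = ∑ i, A i ⬝ᵥ A i := by
  simp only [dotProduct, sq]

lemma fnorm_sq (A : M33) : fnorm A ^ 2 = ∑ i, ∑ j, A i j ^ 2 :=
  Real.sq_sqrt (by positivity)

lemma fnorm_nonneg (A : M33) : 0 ≤ fnorm A := Real.sqrt_nonneg _

lemma fnorm_Tmap_le (A : M33) : fnorm (Tmap A) ≤ 2 * fnorm A ^ 2 := by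
  refine Real.sqrt_le_iff.2 ⟨by positivity, ?_⟩
  have h0 := dotProduct_self_cross_le (A 0) (A 1)
  have h1 := dotProduct_self_cross_le (A 1) (A 2)
  have h2 := dotProduct_self_cross_le (A 2) (A 0)
  have a0 := dotProduct_self_star_nonneg (A 0)
  have a1 := dotProduct_self_star_nonneg (A 1)
  have a2 := dotProduct_self_star_nonneg (A 2)
  simp only [star_trivial] at a0 a1 a2
  rw [fnorm_sq, sum_sq_eq_sum_dotProduct, sum_sq_eq_sum_dotProduct, Tmap_eq_cross]
  simp only [Fin.sum_univ_three, Matrix.cons_val, smul_dotProduct, dotProduct_smul, smul_eq_mul]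
  nlinarith [mul_nonneg a0 a1, mul_nonneg a1 a2, mul_nonneg a2 a0]

lemma abs_dotM_le (X Y : M33) : |dotM X Y| ≤ fnorm X * fnorm Y := by
  have hcs := Finset.sum_mul_sq_le_sq_mul_sq Finset.univ
    (fun p : Fin 3 × Fin 3 => X p.1 p.2) (fun p => Y p.1 p.2)
  simp only [Fintype.sum_prod_type] at hcs
  rw [fnorm, fnorm, ← Real.sqrt_mul (by positivity)]
  exact Real.abs_le_sqrt hcs

lemma dotM_self (A : M33) : dotM A A = fnorm A ^ 2 := by
  rw [fnorm_sq]
  simp only [dotM, sq]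

lemma dotM_mul_const_left (A B : M33) (t : ℝ) :
    dotM (fun i j => A i j * t) B = t * dotM A B := by
  simp only [dotM, Finset.mul_sum]
  exact Fintype.sum_congr _ _ fun i => Fintype.sum_congr _ _ fun j => by ring

lemma fnorm_mul_const {t : ℝ} (ht : 0 ≤ t) (A : M33) :
    fnorm (fun i j => A i j * t) = t * fnorm A := by
  have hsum : ∑ i, ∑ j, (A i j * t) ^ 2 = (t * fnorm A) ^ 2 := by
    simp only [mul_pow, fnorm_sq, Finset.mul_sum]
    exact Fintype.sum_congr _ _ fun i => Fintype.sum_congr _ _ fun j => by ring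
  rw [fnorm, hsum, Real.sqrt_sq (mul_nonneg ht (fnorm_nonneg A))]

lemma objective_lower_bound (H : M33 → ℝ) (hH : ∀ A, H A ≤ (1 / 8) * fnorm A ^ 4)
    (lam mu A : M33) :
    dotM A mu - 2 * fnorm lam * fnorm A ^ 2 - (1 / 8) * fnorm A ^ 4 ≤
      dotM A mu + dotM lam (Tmap A) - H A := by
  have hT : -(2 * fnorm lam * fnorm A ^ 2) ≤ dotM lam (Tmap A) :=
    calc -(2 * fnorm lam * fnorm A ^ 2) ≤ -(fnorm lam * fnorm (Tmap A)) := by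
          have := mul_le_mul_of_nonneg_left (fnorm_Tmap_le A) (fnorm_nonneg lam)
          linarith
      _ ≤ dotM lam (Tmap A) := neg_le_of_abs_le (abs_dotM_le lam (Tmap A))
  linarith [hH A]

lemma rpow_neg_two_thirds_mul_self {r : ℝ} (hr : 0 ≤ r) :
    r ^ (-(2 : ℝ) / 3) * r = r ^ ((1 : ℝ) / 3) := by
  rcases hr.eq_or_lt with rfl | hr
  · simp
  · rw [← Real.rpow_add_one hr.ne']
    norm_num

theorem le_objective_at_witness (H : M33 → ℝ) (hH : ∀ A, H A ≤ (1 / 8) * fnorm A ^ 4)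
    (lam mu : M33) (hsmall : fnorm lam ≤ (3 / 8) * fnorm mu ^ ((2 : ℝ) / 3)) :
    (1 / 16) * (fnorm mu ^ ((4 : ℝ) / 3) + fnorm lam ^ 2) ≤
      dotM (fun i j => mu i j * fnorm mu ^ (-(2 : ℝ) / 3)) mu
        + dotM lam (Tmap (fun i j => mu i j * fnorm mu ^ (-(2 : ℝ) / 3)))
        - H (fun i j => mu i j * fnorm mu ^ (-(2 : ℝ) / 3)) := by
  set A : M33 := fun i j => mu i j * fnorm mu ^ (-(2 : ℝ) / 3) with hA
  have hr := fnorm_nonneg mu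
  set s := fnorm mu ^ ((1 : ℝ) / 3)
  have hpow (n : ℕ) : s ^ n = fnorm mu ^ ((n : ℝ) / 3) := by
    rw [← Real.rpow_mul_natCast hr]
    ring_nf
  have hcube : s ^ 3 = fnorm mu := by simpa using hpow 3
  have hnorm : fnorm A = s := by
    rw [hA, fnorm_mul_const (Real.rpow_nonneg hr _), rpow_neg_two_thirds_mul_self hr]
  have hdot : dotM A mu = s ^ 4 :=
    calc _ = fnorm mu ^ (-(2 : ℝ) / 3) * fnorm mu * fnorm mu := by
          rw [hA, dotM_mul_const_left, dotM_self]
          ring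
      _ = s * s ^ 3 := by rw [rpow_neg_two_thirds_mul_self hr, hcube]
      _ = s ^ 4 := by ring
  have hbound := objective_lower_bound H hH lam mu A
  rw [hnorm, hdot] at hbound
  have hs2 : fnorm mu ^ ((2 : ℝ) / 3) = s ^ 2 := by simpa using (hpow 2).symm
  have hs4 : fnorm mu ^ ((4 : ℝ) / 3) = s ^ 4 := by simpa using (hpow 4).symm
  rw [hs2] at hsmall
  rw [hs4]
  have hl := fnorm_nonneg lam
  nlinarith [mul_le_mul_of_nonneg_right hsmall (sq_nonneg s),
    mul_le_mul hsmall hsmall hl (by positivity)]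

theorem stmt14_general (H : M33 → ℝ)
    (hH1 : ∀ A, H A ≤ (1 / 8) * fnorm A ^ 4)
    (lam mu : M33)
    (hsmall : fnorm lam ≤ (3 / 8) * fnorm mu ^ ((2 : ℝ) / 3)) :
    (((1 / 16) * (fnorm mu ^ ((4 : ℝ) / 3) + fnorm lam ^ 2) : ℝ) : EReal) ≤
      gH H lam mu ∧
    -- the witness `A = μ |μ|^{−2/3}` (which is `0` when `μ = 0`) realizes the bound
    (1 / 16) * (fnorm mu ^ ((4 : ℝ) / 3) + fnorm lam ^ 2) ≤
      dotM (fun i j => mu i j * fnorm mu ^ (-(2 : ℝ) / 3)) mu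
        + dotM lam (Tmap (fun i j => mu i j * fnorm mu ^ (-(2 : ℝ) / 3)))
        - H (fun i j => mu i j * fnorm mu ^ (-(2 : ℝ) / 3)) := by
  have hwitness := le_objective_at_witness H hH1 lam mu hsmall
  exact ⟨le_iSup_of_le _ (EReal.coe_le_coe hwitness), hwitness⟩

theorem stmt14 (H : M33 → ℝ)
    (hH0 : ∀ A, 0 ≤ H A) (hH1 : ∀ A, H A ≤ (1 / 8) * fnorm A ^ 4)
    (lam mu : M33)
    (hsmall : fnorm lam ≤ (3 / 8) * fnorm mu ^ ((2 : ℝ) / 3)) :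
    (((1 / 16) * (fnorm mu ^ ((4 : ℝ) / 3) + fnorm lam ^ 2) : ℝ) : EReal) ≤
      gH H lam mu ∧
    -- the witness `A = μ |μ|^{−2/3}` (which is `0` when `μ = 0`) realizes the bound
    (1 / 16) * (fnorm mu ^ ((4 : ℝ) / 3) + fnorm lam ^ 2) ≤
      dotM (fun i j => mu i j * fnorm mu ^ (-(2 : ℝ) / 3)) mu
        + dotM lam (Tmap (fun i j => mu i j * fnorm mu ^ (-(2 : ℝ) / 3)))
        - H (fun i j => mu i j * fnorm mu ^ (-(2 : ℝ) / 3)) :=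
  stmt14_general H hH1 lam mu hsmall
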